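/- The BKw-G density integrates to one: for any continuous cdf G on ℝ with density g, and parameters a,b,m,n > 0, the integral over ℝ of (1/B(m,n))·a·b·g(t)·G(t)^(a-1)·(1-G(t)^a)^(bn-1)·(1-(1-G(t)^a)^b)^(m-1) dt equals 1. -/

import Mathlib

open MeasureTheory Filter Real

noncomputable def betaFn (m n : ℝ) : ℝ :=
  ∫ x in (0:ℝ)..1, x ^ (m - 1) * (1 - x) ^ (n - 1)

noncomputable def bkwDensity (G g : ℝ → ℝ) (a b m n t : ℝ) : ℝ :=
  (1 / betaFn m n) * a * b * g t * G t ^ (a - 1) * (1 - G t ^ a) ^ (b * n - 1) *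
    (1 - (1 - G t ^ a) ^ b) ^ (m - 1)

/-! Write `W u = 1 - (1 - u ^ a) ^ b` for the Kumaraswamy cdf and `K = W ∘ G`. Where `0 < G t < 1`
the BKw-G density is `B(m,n)⁻¹ · K'(t) · f (K t)` with `f x = x ^ (m - 1) * (1 - x) ^ (n - 1)`;
elsewhere `G` attains its minimum or maximum, so `g t = 0` and the density vanishes. Since `K` is
continuous and monotone with limits `0` and `1`, it maps `K⁻¹' (0,1)` onto `(0,1)`, and the
change of variables `x = K t` (valid for monotone maps, flat pieces included) gives `B(m,n)⁻¹ ∫₀¹ f = 1`. -/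

open Set Topology

theorem intervalIntegrable_beta_integrand {m n : ℝ} (hm : 0 < m) (hn : 0 < n) :
    IntervalIntegrable (fun x : ℝ => x ^ (m - 1) * (1 - x) ^ (n - 1)) volume 0 1 := by
  refine (Complex.betaIntegral_convergent (u := m) (v := n) (by simpa) (by simpa)).norm.congr_uIoo
    fun x hx => ?_
  rw [uIoo_of_le zero_le_one] at hx
  have h1x : (1 : ℂ) - x = ((1 - x : ℝ) : ℂ) := by push_cast; ring
  simp only [norm_mul, h1x, Complex.norm_cpow_eq_rpow_re_of_pos hx.1,
    Complex.norm_cpow_eq_rpow_re_of_pos (sub_pos.2 hx.2)]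
  simp

theorem betaFn_pos {m n : ℝ} (hm : 0 < m) (hn : 0 < n) : 0 < betaFn m n :=
  intervalIntegral.intervalIntegral_pos_of_pos_on (intervalIntegrable_beta_integrand hm hn)
    (fun _ hx => mul_pos (rpow_pos_of_pos hx.1 _) (rpow_pos_of_pos (sub_pos.2 hx.2) _)) one_pos

theorem betaFn_eq_setIntegral_Ioo (m n : ℝ) :
    betaFn m n = ∫ x in Ioo 0 1, x ^ (m - 1) * (1 - x) ^ (n - 1) := by
  rw [betaFn, intervalIntegral.integral_of_le zero_le_one, integral_Ioc_eq_integral_Ioo]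

theorem Ioo_subset_range_of_tendsto {K : ℝ → ℝ} {c d : ℝ} (hK : Continuous K)
    (hbot : Tendsto K atBot (𝓝 c)) (htop : Tendsto K atTop (𝓝 d)) : Ioo c d ⊆ range K :=
  fun _ hu => mem_range_of_exists_le_of_exists_ge hK
    ((hbot.eventually (eventually_lt_nhds hu.1)).exists.imp fun _ => le_of_lt)
    ((htop.eventually (eventually_gt_nhds hu.2)).exists.imp fun _ => le_of_lt)

theorem integral_preimage_Ioo_deriv_smul {E : Type*} [NormedAddCommGroup E] [NormedSpace ℝ E]
    {K k : ℝ → ℝ} {c d : ℝ} (hK : Continuous K) (hmono : MonotoneOn K (K ⁻¹' Ioo c d))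
    (hbot : Tendsto K atBot (𝓝 c)) (htop : Tendsto K atTop (𝓝 d))
    (hderiv : ∀ t ∈ K ⁻¹' Ioo c d, HasDerivAt K (k t) t) (φ : ℝ → E) :
    ∫ t in K ⁻¹' Ioo c d, k t • φ (K t) = ∫ u in Ioo c d, φ u := by
  rw [← integral_image_eq_integral_deriv_smul_of_monotoneOn
    (isOpen_Ioo.preimage hK).measurableSet (fun t ht => (hderiv t ht).hasDerivWithinAt)
    hmono, image_preimage_eq_of_subset (Ioo_subset_range_of_tendsto hK hbot htop)]

theorem HasDerivAt.eq_zero_of_notMem_Ioo {G : ℝ → ℝ} {g' c d t : ℝ} (hG : ∀ s, G s ∈ Icc c d)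
    (h : HasDerivAt G g' t) (ht : G t ∉ Ioo c d) : g' = 0 := by
  rcases not_and_or.1 ht with hc | hd
  · exact IsLocalMin.hasDerivAt_eq_zero (.of_forall fun s => (not_lt.1 hc).trans (hG s).1) h
  · exact IsLocalMax.hasDerivAt_eq_zero (.of_forall fun s => (hG s).2.trans (not_lt.1 hd)) h

noncomputable def kumaraswamyCDF (a b u : ℝ) : ℝ := 1 - (1 - u ^ a) ^ b

noncomputable def kumaraswamyPDF (a b u : ℝ) : ℝ := a * b * u ^ (a - 1) * (1 - u ^ a) ^ (b - 1)

section Kumaraswamy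

variable {a b : ℝ}

theorem kumaraswamyCDF_zero (ha : a ≠ 0) : kumaraswamyCDF a b 0 = 0 := by
  simp [kumaraswamyCDF, zero_rpow ha]

theorem kumaraswamyCDF_one (hb : b ≠ 0) : kumaraswamyCDF a b 1 = 1 := by
  simp [kumaraswamyCDF, zero_rpow hb]

theorem continuous_kumaraswamyCDF (ha : 0 ≤ a) (hb : 0 ≤ b) : Continuous (kumaraswamyCDF a b) :=
  continuous_const.sub <|
    (continuous_const.sub <| continuous_id.rpow_const fun _ => .inr ha).rpow_const fun _ => .inr hb

theorem strictMonoOn_kumaraswamyCDF (ha : 0 < a) (hb : 0 < b) :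
    StrictMonoOn (kumaraswamyCDF a b) (Icc 0 1) := by
  intro u hu v hv huv
  have hva : v ^ a ≤ 1 := rpow_le_one (hu.1.trans huv.le) hv.2 ha.le
  have hlt : u ^ a < v ^ a := rpow_lt_rpow hu.1 huv ha
  have hpow := rpow_lt_rpow (sub_nonneg.2 hva) (sub_lt_sub_left hlt 1) hb
  simp only [kumaraswamyCDF]
  linarith

theorem kumaraswamyCDF_mem_Ioo_iff (ha : 0 < a) (hb : 0 < b) {u : ℝ} (hu : u ∈ Icc 0 1) :
    kumaraswamyCDF a b u ∈ Ioo 0 1 ↔ u ∈ Ioo 0 1 := by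
  have hmono := strictMonoOn_kumaraswamyCDF ha hb
  conv_lhs => rw [← kumaraswamyCDF_zero (b := b) ha.ne', ← kumaraswamyCDF_one (a := a) hb.ne']
  rw [mem_Ioo, mem_Ioo, hmono.lt_iff_lt (left_mem_Icc.2 zero_le_one) hu,
    hmono.lt_iff_lt hu (right_mem_Icc.2 zero_le_one)]

theorem hasDerivAt_kumaraswamyCDF (ha : 0 < a) {u : ℝ} (hu : u ∈ Ioo 0 1) :
    HasDerivAt (kumaraswamyCDF a b) (kumaraswamyPDF a b u) u := by
  have hua : u ^ a < 1 := rpow_lt_one hu.1.le hu.2 ha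
  exact ((((hasDerivAt_rpow_const (p := a) (.inl hu.1.ne')).const_sub 1).rpow_const
    (p := b) (.inl (sub_pos.2 hua).ne')).const_sub 1).congr_deriv (by rw [kumaraswamyPDF]; ring)

end Kumaraswamy

theorem bkwDensity_eq_kumaraswamyPDF_mul {G g : ℝ → ℝ} {a b m n t : ℝ} (hGt : G t ^ a < 1) :
    bkwDensity G g a b m n t = (betaFn m n)⁻¹ * (kumaraswamyPDF a b (G t) * g t *
      (kumaraswamyCDF a b (G t) ^ (m - 1) * (1 - kumaraswamyCDF a b (G t)) ^ (n - 1))) := by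
  have hpos : 0 < 1 - G t ^ a := sub_pos.2 hGt
  have hpow : ((1 - G t ^ a) ^ b) ^ (n - 1) * (1 - G t ^ a) ^ (b - 1) =
      (1 - G t ^ a) ^ (b * n - 1) := by
    rw [← rpow_mul hpos.le, ← rpow_add hpos]
    ring_nf
  rw [bkwDensity, kumaraswamyPDF, kumaraswamyCDF, sub_sub_cancel, one_div, ← hpow]
  ring

theorem bkw_density_integrates_to_one
    (G g : ℝ → ℝ) (a b m n : ℝ)
    (ha : 0 < a) (hb : 0 < b) (hm : 0 < m) (hn : 0 < n)
    (hGcont : Continuous G)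
    (hderiv : ∀ t, HasDerivAt G (g t) t)
    (hg : ∀ t, 0 ≤ g t)
    (hG0 : Tendsto G atBot (nhds 0))
    (hG1 : Tendsto G atTop (nhds 1))
    (hGrange : ∀ t, G t ∈ Set.Icc (0:ℝ) 1) :
    ∫ t : ℝ, bkwDensity G g a b m n t = 1 := by
  have hGmono : Monotone G := monotone_of_deriv_nonneg (fun t => (hderiv t).differentiableAt)
    fun t => (hderiv t).deriv ▸ hg t
  have hW := continuous_kumaraswamyCDF ha.le hb.le
  set K : ℝ → ℝ := fun t => kumaraswamyCDF a b (G t)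
  have hU (t : ℝ) : t ∈ K ⁻¹' Ioo 0 1 ↔ G t ∈ Ioo 0 1 :=
    kumaraswamyCDF_mem_Ioo_iff ha hb (hGrange t)
  have hK : Continuous K := hW.comp hGcont
  have hKmono : Monotone K := fun x y hxy =>
    (strictMonoOn_kumaraswamyCDF ha hb).monotoneOn (hGrange x) (hGrange y) (hGmono hxy)
  have hKbot : Tendsto K atBot (𝓝 0) :=
    kumaraswamyCDF_zero (b := b) ha.ne' ▸ (hW.tendsto 0).comp hG0
  have hKtop : Tendsto K atTop (𝓝 1) :=
    kumaraswamyCDF_one (a := a) hb.ne' ▸ (hW.tendsto 1).comp hG1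
  have hKderiv : ∀ t ∈ K ⁻¹' Ioo 0 1, HasDerivAt K (kumaraswamyPDF a b (G t) * g t) t :=
    fun t ht => (hasDerivAt_kumaraswamyCDF ha ((hU t).1 ht)).comp t (hderiv t)
  calc ∫ t, bkwDensity G g a b m n t = ∫ t in K ⁻¹' Ioo 0 1, bkwDensity G g a b m n t := by
        refine (setIntegral_eq_integral_of_forall_compl_eq_zero fun t ht => ?_).symm
        rw [bkwDensity, (hderiv t).eq_zero_of_notMem_Ioo hGrange ((hU t).not.1 ht)]
        simp
    _ = ∫ t in K ⁻¹' Ioo 0 1, (betaFn m n)⁻¹ *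
          ((kumaraswamyPDF a b (G t) * g t) • (K t ^ (m - 1) * (1 - K t) ^ (n - 1))) :=
        setIntegral_congr_fun (isOpen_Ioo.preimage hK).measurableSet fun t ht =>
          bkwDensity_eq_kumaraswamyPDF_mul (rpow_lt_one (hGrange t).1 ((hU t).1 ht).2 ha)
    _ = (betaFn m n)⁻¹ * ∫ x in Ioo 0 1, x ^ (m - 1) * (1 - x) ^ (n - 1) := by
        rw [integral_const_mul, integral_preimage_Ioo_deriv_smul hK (hKmono.monotoneOn _) hKbot
          hKtop hKderiv (fun x => x ^ (m - 1) * (1 - x) ^ (n - 1))]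
    _ = 1 := by rw [← betaFn_eq_setIntegral_Ioo, inv_mul_cancel₀ (betaFn_pos hm hn).ne']
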